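/- arXiv:1702.06810 — 2 statements merged into one kernel-verified Lean document; each statement's English description precedes it below -/
import Mathlib

section
/- If Z ~ N(A, B²) with B > 0, then for constants a > 0 and K > 0 with φ = ln(K/a), E[(a·e^Z - K)⁺] = a·e^{A + B²/2}·Φ(B - φ/B + A/B) - K·Φ(A/B - φ/B), where Φ is the standard normal CDF. -/
open MeasureTheory ProbabilityTheory Real

/-- The standard normal cumulative distribution function. -/
noncomputable def stdNormalCDF (x : ℝ) : ℝ :=
  ∫ t in Set.Iic x, Real.exp (-t ^ 2 / 2) / Real.sqrt (2 * Real.pi)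
/-- Affine substitution for set integrals over `Ici`. -/
lemma integral_Ici_affine (B m c : ℝ) (hB : 0 < B) (g : ℝ → ℝ) :
    ∫ z in Set.Ici c, g z = B * ∫ t in Set.Ici ((c - m) / B), g (m + B * t) := by
  have hB' : B ≠ 0 := hB.ne'
  set e : ℝ → ℝ := fun t => m + B * t with he_def
  have he : MeasurableEmbedding e := by
    have : e = (fun x : ℝ => m + x) ∘ (fun t : ℝ => B * t) := rfl
    rw [this]
    exact ((Homeomorph.addLeft m).measurableEmbedding).comp
      ((Homeomorph.mulLeft₀ B hB').measurableEmbedding)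
  have hmap : Measure.map e volume = ENNReal.ofReal B⁻¹ • volume := by
    have h1 : Measure.map (fun t : ℝ => B * t) volume = ENNReal.ofReal |B⁻¹| • volume :=
      Real.map_volume_mul_left hB'
    have : Measure.map e volume
        = Measure.map (fun x : ℝ => m + x) (Measure.map (fun t : ℝ => B * t) volume) := by
      rw [Measure.map_map (measurable_const_add m) (measurable_const_mul B)]
      rfl
    rw [this, h1, Measure.map_smul, map_add_left_eq_self, abs_of_pos (inv_pos.mpr hB)]
  have hpre : e ⁻¹' Set.Ici c = Set.Ici ((c - m) / B) := by
    ext t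
    simp only [Set.mem_preimage, Set.mem_Ici, he_def, div_le_iff₀ hB]
    constructor <;> intro h <;> nlinarith
  calc ∫ z in Set.Ici c, g z ∂volume
      = ∫ z in Set.Ici c, g z ∂(ENNReal.ofReal B • Measure.map e volume) := by
        rw [hmap, smul_smul, ← ENNReal.ofReal_mul hB.le, mul_inv_cancel₀ hB', ENNReal.ofReal_one,
          one_smul]
    _ = B * ∫ z in Set.Ici c, g z ∂(Measure.map e volume) := by
        rw [Measure.restrict_smul, integral_smul_measure, ENNReal.toReal_ofReal hB.le, smul_eq_mul]
    _ = B * ∫ t in e ⁻¹' Set.Ici c, g (e t) := by rw [he.setIntegral_map]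
    _ = B * ∫ t in Set.Ici ((c - m) / B), g (m + B * t) := by rw [hpre]

lemma coe_toNNReal_sq (B : ℝ) : ((B ^ 2).toNNReal : ℝ) = B ^ 2 :=
  Real.coe_toNNReal _ (sq_nonneg B)

lemma gaussianPDFReal_affine (B m : ℝ) (hB : 0 < B) (t : ℝ) :
    gaussianPDFReal m (B ^ 2).toNNReal (m + B * t)
      = B⁻¹ * (Real.exp (-t ^ 2 / 2) / Real.sqrt (2 * Real.pi)) := by
  rw [gaussianPDFReal, coe_toNNReal_sq B]
  have h2 : Real.sqrt (2 * π * B ^ 2) = Real.sqrt (2 * π) * B := by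
    rw [Real.sqrt_mul (by positivity), Real.sqrt_sq hB.le]
  rw [h2]
  have h3 : -(m + B * t - m) ^ 2 / (2 * B ^ 2) = -t ^ 2 / 2 := by
    field_simp; ring
  rw [h3]
  field_simp

lemma integral_Ici_gaussianPDFReal (B m c : ℝ) (hB : 0 < B) :
    ∫ z in Set.Ici c, gaussianPDFReal m (B ^ 2).toNNReal z = stdNormalCDF ((m - c) / B) := by
  rw [integral_Ici_affine B m c hB]
  simp_rw [gaussianPDFReal_affine B m hB, integral_const_mul, ← mul_assoc,
    mul_inv_cancel₀ hB.ne', one_mul]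
  rw [stdNormalCDF]
  have hneg : ((m - c) / B) = -((c - m) / B) := by ring
  rw [hneg, integral_Ici_eq_integral_Ioi,
    show Set.Ioi ((c - m) / B) = Set.Ioi (-(-((c - m) / B))) by rw [neg_neg],
    ← integral_comp_neg_Iic]
  congr 1
  ext x
  ring_nf

lemma tilt (B A : ℝ) (z : ℝ) (hB : 0 < B) :
    Real.exp z * gaussianPDFReal A (B ^ 2).toNNReal z
      = Real.exp (A + B ^ 2 / 2) * gaussianPDFReal (A + B ^ 2) (B ^ 2).toNNReal z := by
  rw [gaussianPDFReal, gaussianPDFReal, coe_toNNReal_sq B]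
  have h : Real.exp z * Real.exp (-(z - A) ^ 2 / (2 * B ^ 2))
      = Real.exp (A + B ^ 2 / 2) * Real.exp (-(z - (A + B ^ 2)) ^ 2 / (2 * B ^ 2)) := by
    rw [← Real.exp_add, ← Real.exp_add]
    congr 1
    field_simp
    ring
  rw [mul_left_comm, h, mul_left_comm]

theorem gaussian_call_payoff (A B a K : ℝ) (hB : 0 < B) (ha : 0 < a) (hK : 0 < K) :
    ∫ z : ℝ, max (a * Real.exp z - K) 0 ∂(gaussianReal A (B ^ 2).toNNReal) =
      a * Real.exp (A + B ^ 2 / 2) *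
          stdNormalCDF (B - (Real.log K - Real.log a) / B + A / B) -
        K * stdNormalCDF (A / B - (Real.log K - Real.log a) / B) := by
  set φ : ℝ := Real.log K - Real.log a with hφ
  set v : NNReal := (B ^ 2).toNNReal with hv_def
  have hv : v ≠ 0 := by
    simp only [hv_def, ne_eq, Real.toNNReal_eq_zero, not_le]
    positivity
  have hexpφ : Real.exp φ = K / a := by
    rw [hφ, Real.exp_sub, Real.exp_log hK, Real.exp_log ha]
  rw [gaussianReal_of_var_ne_zero A hv]
  have step1 : ∫ z, max (a * Real.exp z - K) 0 ∂(volume.withDensity (gaussianPDF A v)) =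
      ∫ z, gaussianPDFReal A v z * max (a * Real.exp z - K) 0 := by
    rw [show gaussianPDF A v = fun x => ((gaussianPDFReal A v x).toNNReal : ENNReal) from rfl,
      integral_withDensity_eq_integral_smul ((measurable_gaussianPDFReal A v).real_toNNReal)]
    congr 1
    ext z
    rw [NNReal.smul_def, smul_eq_mul, Real.coe_toNNReal _ (gaussianPDFReal_nonneg A v z)]
  rw [step1]
  have hind : ∀ z, gaussianPDFReal A v z * max (a * Real.exp z - K) 0
      = Set.indicator (Set.Ici φ) (fun z => gaussianPDFReal A v z * (a * Real.exp z - K)) z := by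
    intro z
    by_cases hz : φ ≤ z
    · rw [Set.indicator_of_mem (Set.mem_Ici.mpr hz)]
      congr 1
      apply max_eq_left
      have h1 : K / a ≤ Real.exp z := hexpφ ▸ Real.exp_le_exp.mpr hz
      have h2 : K ≤ a * Real.exp z := by
        rw [div_le_iff₀ ha] at h1; linarith [mul_comm (Real.exp z) a ▸ h1]
      linarith
    · rw [Set.indicator_of_notMem (by simpa using hz)]
      have h1 : Real.exp z ≤ K / a := hexpφ ▸ Real.exp_le_exp.mpr (not_le.mp hz).le
      have h2 : a * Real.exp z ≤ K := by
        rw [le_div_iff₀ ha] at h1; linarith [mul_comm (Real.exp z) a ▸ h1]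
      rw [max_eq_right (by linarith), mul_zero]
  simp_rw [hind]
  rw [integral_indicator measurableSet_Ici]
  have htilt : (fun z => Real.exp z * gaussianPDFReal A v z)
      = fun z => Real.exp (A + B ^ 2 / 2) * gaussianPDFReal (A + B ^ 2) v z :=
    funext fun z => tilt B A z hB
  have hint2 : Integrable (fun z => Real.exp z * gaussianPDFReal A v z) := by
    rw [htilt]; exact (integrable_gaussianPDFReal _ _).const_mul _
  have heq : ∀ z, gaussianPDFReal A v z * (a * Real.exp z - K)
      = a * (Real.exp z * gaussianPDFReal A v z) - K * gaussianPDFReal A v z := by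
    intro z; ring
  simp_rw [heq]
  rw [integral_sub ((hint2.const_mul a).integrableOn)
    (((integrable_gaussianPDFReal A v).const_mul K).integrableOn),
    integral_const_mul, integral_const_mul]
  have hI2 : ∫ z in Set.Ici φ, Real.exp z * gaussianPDFReal A v z
      = Real.exp (A + B ^ 2 / 2) * stdNormalCDF (B - φ / B + A / B) := by
    calc ∫ z in Set.Ici φ, Real.exp z * gaussianPDFReal A v z
        = ∫ z in Set.Ici φ, Real.exp (A + B ^ 2 / 2) * gaussianPDFReal (A + B ^ 2) v z := by
          rw [show (fun z => Real.exp z * gaussianPDFReal A v z) = _ from htilt]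
      _ = Real.exp (A + B ^ 2 / 2) * ∫ z in Set.Ici φ, gaussianPDFReal (A + B ^ 2) v z := by
          rw [integral_const_mul]
      _ = Real.exp (A + B ^ 2 / 2) * stdNormalCDF (B - φ / B + A / B) := by
          rw [hv_def, integral_Ici_gaussianPDFReal B (A + B ^ 2) φ hB]
          congr 2
          field_simp
          ring
  have hI1 : ∫ z in Set.Ici φ, gaussianPDFReal A v z = stdNormalCDF (A / B - φ / B) := by
    rw [hv_def, integral_Ici_gaussianPDFReal B A φ hB]
    congr 1
    field_simp
  rw [hI1, hI2]
  ring
end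

section
/- The Poisson-mixture option pricing identity: if conditional on N = k (N ~ Poisson(λT)) the random variable Θ is N(A_k, B_k²) with B_k > 0, then E[(a·e^Θ - K)⁺] = ∑_{k=0}^∞ (e^{-λT}(λT)^k/k!)·(a·e^{A_k + B_k²/2}·Φ(B_k - φ/B_k + A_k/B_k) - K·Φ(A_k/B_k - φ/B_k)), where φ = ln(K/a), provided the series of expectations converges absolutely. -/
/-!
Conditioning on the value of `N` writes the price as `∑ P(N = k) · E[(a e^Θ - K)⁺ | N = k]`, and
each conditional price is a Black–Scholes price for `Θ ~ N(μ, σ²)`. The payoff vanishes for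
`Θ ≤ φ = log K - log a`; on `(φ, ∞)` the factor `e^x` turns the `N(μ, σ²)` density into
`e^(μ + σ²/2)` times the `N(μ + σ², σ²)` density (exponential tilting), so both terms are Gaussian
tail probabilities `N(m, σ²)(φ, ∞) = Φ((m - φ) / σ)`.
-/

open MeasureTheory ProbabilityTheory Real

open Set
open scoped NNReal ENNReal

section TotalExpectation

variable {Ω E : Type*} {mΩ : MeasurableSpace Ω} {μ : Measure Ω}
  [NormedAddCommGroup E] [NormedSpace ℝ E] {f : Ω → E}

lemma setIntegral_eq_measureReal_smul_integral_cond {s : Set Ω} (hs : μ s ≠ ∞) :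
    ∫ ω in s, f ω ∂μ = μ.real s • ∫ ω, f ω ∂μ[|s] := by
  rcases eq_or_ne (μ s) 0 with h0 | h0
  · simp [Measure.restrict_eq_zero.mpr h0, measureReal_def, h0]
  · rw [ProbabilityTheory.cond, integral_smul_measure, smul_smul, ENNReal.toReal_inv,
      measureReal_def, mul_inv_cancel₀ (ENNReal.toReal_ne_zero.mpr ⟨h0, hs⟩), one_smul]

lemma integral_eq_tsum_measureReal_smul_integral_cond {α : Type*} [Countable α]
    [MeasurableSpace α] [MeasurableSingletonClass α] [IsFiniteMeasure μ] {X : Ω → α}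
    (hX : Measurable X) (hf : Integrable f μ) :
    ∫ ω, f ω ∂μ = ∑' x, μ.real (X ⁻¹' {x}) • ∫ ω, f ω ∂μ[|X ← x] := by
  have hfibres : ⋃ x, X ⁻¹' {x} = univ := by ext; simp
  rw [← setIntegral_univ, ← hfibres, integral_iUnion (fun x ↦ hX (measurableSet_singleton x))
    (pairwise_disjoint_fiber X) (hfibres ▸ hf.integrableOn)]
  exact tsum_congr fun x ↦ setIntegral_eq_measureReal_smul_integral_cond (measure_ne_top _ _)

lemma measure_ne_zero_of_map_cond_eq {β : Type*} [MeasurableSpace β] {ν : Measure β} [NeZero ν]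
    {X : Ω → β} {s : Set Ω} (h : (μ[|s]).map X = ν) : μ s ≠ 0 := by
  intro h0
  rw [cond_eq_zero_of_meas_eq_zero h0, Measure.map_zero] at h
  exact NeZero.ne ν h.symm

end TotalExpectation

lemma exp_mul_gaussianPDFReal (μ : ℝ) (v : ℝ≥0) (x : ℝ) :
    exp x * gaussianPDFReal μ v x = exp (μ + v / 2) * gaussianPDFReal (μ + v) v x := by
  rcases eq_or_ne v 0 with rfl | hv
  · simp [gaussianPDFReal_zero_var]
  simp only [gaussianPDFReal_def]
  rw [mul_left_comm, mul_left_comm (exp _), ← exp_add, ← exp_add]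
  congr 2
  have hv' : (v : ℝ) ≠ 0 := by exact_mod_cast hv
  field_simp
  ring

lemma setIntegral_exp_gaussianReal (μ : ℝ) {v : ℝ≥0} (hv : v ≠ 0) {s : Set ℝ}
    (hs : MeasurableSet s) :
    ∫ x in s, exp x ∂gaussianReal μ v = exp (μ + v / 2) * (gaussianReal (μ + v) v).real s := by
  calc ∫ x in s, exp x ∂gaussianReal μ v
      = ∫ x in s, exp x * gaussianPDFReal μ v x := by
        rw [gaussianReal_of_var_ne_zero _ hv, gaussianPDF_def,
          setIntegral_withDensity_eq_setIntegral_toReal_smul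
            (measurable_gaussianPDFReal _ _).ennreal_ofReal
            (ae_of_all _ fun _ ↦ ENNReal.ofReal_lt_top) _ hs]
        simp [ENNReal.toReal_ofReal (gaussianPDFReal_nonneg _ _ _), mul_comm]
    _ = exp (μ + v / 2) * ∫ x in s, gaussianPDFReal (μ + v) v x := by
        simp_rw [exp_mul_gaussianPDFReal, integral_const_mul]
    _ = _ := by
        rw [measureReal_def, gaussianReal_apply_eq_integral _ hv,
          ENNReal.toReal_ofReal (setIntegral_nonneg hs fun _ _ ↦ gaussianPDFReal_nonneg _ _ _)]

lemma stdNormalCDF_eq_measureReal_Iic (x : ℝ) :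
    stdNormalCDF x = (gaussianReal 0 1).real (Iic x) := by
  rw [measureReal_def, gaussianReal_apply_eq_integral _ one_ne_zero, ENNReal.toReal_ofReal
    (setIntegral_nonneg measurableSet_Iic fun _ _ ↦ gaussianPDFReal_nonneg _ _ _)]
  simp [stdNormalCDF, gaussianPDFReal_def, div_eq_inv_mul]

lemma gaussianReal_eq_map_const_sub_mul (μ : ℝ) {σ : ℝ} :
    gaussianReal μ (σ ^ 2).toNNReal = (gaussianReal 0 1).map (fun z ↦ μ - σ * z) := by
  have hcomp : (fun z ↦ μ - σ * z) = (μ - ·) ∘ (σ * ·) := rfl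
  rw [hcomp, ← Measure.map_map (by fun_prop) (by fun_prop), gaussianReal_map_const_mul,
    gaussianReal_map_const_sub]
  congr 1
  · ring
  · ext; simp [sq_nonneg]

lemma gaussianReal_real_Ioi (μ c : ℝ) {σ : ℝ} (hσ : 0 < σ) :
    (gaussianReal μ (σ ^ 2).toNNReal).real (Ioi c) = stdNormalCDF ((μ - c) / σ) := by
  have hpre : (fun z ↦ μ - σ * z) ⁻¹' Ioi c = Iio ((μ - c) / σ) := by
    ext z
    simp only [mem_preimage, mem_Ioi, mem_Iio, lt_div_iff₀ hσ]
    constructor <;> intro <;> linarith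
  have := nullSingletonClass_gaussianReal (μ := 0) one_ne_zero
  rw [gaussianReal_eq_map_const_sub_mul, map_measureReal_apply (by fun_prop) measurableSet_Ioi,
    hpre, stdNormalCDF_eq_measureReal_Iic, measureReal_congr Iio_ae_eq_Iic]

lemma max_mul_exp_sub_zero_eq_indicator {a K : ℝ} (ha : 0 < a) (hK : 0 < K) (x : ℝ) :
    max (a * exp x - K) 0 = (Ioi (log K - log a)).indicator (fun x ↦ a * exp x - K) x := by
  have hmoneyness : 0 < a * exp x - K ↔ x ∈ Ioi (log K - log a) := by
    rw [sub_pos, ← log_lt_log_iff hK (by positivity), log_mul ha.ne' (exp_pos x).ne', log_exp,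
      mem_Ioi, sub_lt_iff_lt_add']
  by_cases h : x ∈ Ioi (log K - log a)
  · rw [indicator_of_mem h, max_eq_left (hmoneyness.mpr h).le]
  · rw [indicator_of_notMem h, max_eq_right (not_lt.mp (mt hmoneyness.mp h))]

lemma integral_max_mul_exp_sub_gaussianReal {a K : ℝ} (ha : 0 < a) (hK : 0 < K) (μ : ℝ) {σ : ℝ}
    (hσ : 0 < σ) :
    ∫ x, max (a * exp x - K) 0 ∂gaussianReal μ (σ ^ 2).toNNReal =
      a * exp (μ + σ ^ 2 / 2) * stdNormalCDF ((μ + σ ^ 2 - (log K - log a)) / σ) -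
        K * stdNormalCDF ((μ - (log K - log a)) / σ) := by
  have hv : (σ ^ 2).toNNReal ≠ 0 := by simpa using hσ.ne'
  have hvσ : ((σ ^ 2).toNNReal : ℝ) = σ ^ 2 := Real.coe_toNNReal _ (sq_nonneg σ)
  have hexp : Integrable exp (gaussianReal μ (σ ^ 2).toNNReal) := by
    simpa using integrable_exp_mul_gaussianReal (μ := μ) (v := (σ ^ 2).toNNReal) 1
  simp_rw [max_mul_exp_sub_zero_eq_indicator ha hK]
  rw [integral_indicator measurableSet_Ioi,
    integral_sub (hexp.const_mul a).integrableOn (integrable_const K).integrableOn,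
    integral_const_mul, setIntegral_exp_gaussianReal _ hv measurableSet_Ioi, setIntegral_const,
    gaussianReal_real_Ioi _ _ hσ, gaussianReal_real_Ioi _ _ hσ, hvσ, smul_eq_mul]
  ring

theorem poisson_mixture_option_pricing_general
    {Ω : Type*} [MeasureSpace Ω] (P : Measure Ω) [IsProbabilityMeasure P]
    (a K lam T : ℝ) (ha : 0 < a) (hK : 0 < K)
    (N : Ω → ℕ) (Θ : Ω → ℝ)
    (hNmeas : Measurable N) (hΘmeas : Measurable Θ)
    (A B : ℕ → ℝ) (hB : ∀ k, 0 < B k)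
    -- N is Poisson with mean λT
    (hN : ∀ k : ℕ, P {ω | N ω = k} =
      ENNReal.ofReal (Real.exp (-(lam * T)) * (lam * T) ^ k / Nat.factorial k))
    -- conditional on N = k, Θ is Gaussian N(A k, (B k)²)
    (hΘ : ∀ k : ℕ, Measure.map Θ (P[|{ω | N ω = k}]) =
      gaussianReal (A k) ((B k) ^ 2).toNNReal)
    -- integrability of the payoff
    (hint : Integrable (fun ω => max (a * Real.exp (Θ ω) - K) 0) P) :
    ∫ ω, max (a * Real.exp (Θ ω) - K) 0 ∂P =
      ∑' k : ℕ, (Real.exp (-(lam * T)) * (lam * T) ^ k / Nat.factorial k) *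
        (a * Real.exp (A k + (B k) ^ 2 / 2) *
            stdNormalCDF (B k - (Real.log K - Real.log a) / B k + A k / B k) -
          K * stdNormalCDF (A k / B k - (Real.log K - Real.log a) / B k)) := by
  rw [integral_eq_tsum_measureReal_smul_integral_cond hNmeas hint]
  refine tsum_congr fun k ↦ ?_
  have hprob : P (N ⁻¹' {k}) = ENNReal.ofReal (exp (-(lam * T)) * (lam * T) ^ k / k.factorial) :=
    hN k
  have hlaw : (P[|N ← k]).map Θ = gaussianReal (A k) (B k ^ 2).toNNReal := hΘ k
  have hpoisson : 0 < exp (-(lam * T)) * (lam * T) ^ k / k.factorial := by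
    simpa [hprob] using measure_ne_zero_of_map_cond_eq hlaw
  rw [measureReal_def, hprob, ENNReal.toReal_ofReal hpoisson.le, smul_eq_mul,
    ← integral_map (f := fun x ↦ max (a * exp x - K) 0) hΘmeas.aemeasurable (by fun_prop), hlaw,
    integral_max_mul_exp_sub_gaussianReal ha hK _ (hB k)]
  have hBk := (hB k).ne'
  rw [sub_div (A k), show (A k + B k ^ 2 - (log K - log a)) / B k
    = B k - (log K - log a) / B k + A k / B k by field_simp; ring]

theorem poisson_mixture_option_pricing
    {Ω : Type*} [MeasureSpace Ω] (P : Measure Ω) [IsProbabilityMeasure P]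
    (a K lam T : ℝ) (ha : 0 < a) (hK : 0 < K) (hlamT : 0 < lam * T)
    (N : Ω → ℕ) (Θ : Ω → ℝ)
    (hNmeas : Measurable N) (hΘmeas : Measurable Θ)
    (A B : ℕ → ℝ) (hB : ∀ k, 0 < B k)
    -- N is Poisson with mean λT
    (hN : ∀ k : ℕ, P {ω | N ω = k} =
      ENNReal.ofReal (Real.exp (-(lam * T)) * (lam * T) ^ k / Nat.factorial k))
    -- conditional on N = k, Θ is Gaussian N(A k, (B k)²)
    (hΘ : ∀ k : ℕ, Measure.map Θ (P[|{ω | N ω = k}]) =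
      gaussianReal (A k) ((B k) ^ 2).toNNReal)
    -- integrability of the payoff
    (hint : Integrable (fun ω => max (a * Real.exp (Θ ω) - K) 0) P) :
    ∫ ω, max (a * Real.exp (Θ ω) - K) 0 ∂P =
      ∑' k : ℕ, (Real.exp (-(lam * T)) * (lam * T) ^ k / Nat.factorial k) *
        (a * Real.exp (A k + (B k) ^ 2 / 2) *
            stdNormalCDF (B k - (Real.log K - Real.log a) / B k + A k / B k) -
          K * stdNormalCDF (A k / B k - (Real.log K - Real.log a) / B k)) :=
  poisson_mixture_option_pricing_general P a K lam T ha hK N Θ hNmeas hΘmeas A B hB hN hΘ hint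
end
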